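/- arXiv:2406.04060 — 4 statements merged into one kernel-verified Lean document; each statement's English description precedes it below -/
import Mathlib

section
/- For distinct vertices u and v of the complete bipartite graph K_{m,n} with parts X of size m and Y of size n, the effective resistance (resistance distance) between u and v equals 2/n if both u,v lie in X, equals 2/m if both lie in Y, and equals (m+n-1)/(mn) if u lies in X and v lies in Y. -/
open Matrix Finset

open Classical in
/-- The Moore–Penrose pseudoinverse of a real square matrix, defined via the
four Penrose conditions (it is unique when it exists). -/
noncomputable def Matrix.mpinv {m : Type*} [Fintype m] [DecidableEq m]
    (A : Matrix m m ℝ) : Matrix m m ℝ :=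
  if h : ∃ B : Matrix m m ℝ,
      A * B * A = A ∧ B * A * B = B ∧ (A * B)ᵀ = A * B ∧ (B * A)ᵀ = B * A
  then h.choose else 0

/-- Effective resistance between `u` and `v` with respect to a (weighted)
Laplacian matrix `L`:  `(e_u - e_v)ᵀ L⁺ (e_u - e_v)`. -/
noncomputable def effRes {m : Type*} [Fintype m] [DecidableEq m]
    (L : Matrix m m ℝ) (u v : m) : ℝ :=
  (Pi.single u 1 - Pi.single v 1) ⬝ᵥ (L.mpinv *ᵥ (Pi.single u 1 - Pi.single v 1))

/-- The (real) Laplacian matrix of a simple graph. -/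
noncomputable def lapm {V : Type*} [Fintype V] [DecidableEq V]
    (G : SimpleGraph V) : Matrix V V ℝ :=
  letI := Classical.decRel G.Adj
  G.lapMatrix ℝ

/-- Resistance distance between two vertices of a simple graph. -/
noncomputable def resDist {V : Type*} [Fintype V] [DecidableEq V]
    (G : SimpleGraph V) (u v : V) : ℝ :=
  effRes (lapm G) u v

/-- Resistance diameter of a simple graph. -/
noncomputable def resDiam {V : Type*} [Fintype V] [DecidableEq V]
    (G : SimpleGraph V) : ℝ :=
  ⨆ p : V × V, resDist G p.1 p.2

/-- The weighted Laplacian of the cone over `G` with apex `Sum.inr ()`: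
edges of `G` have conductance `1` (unit resistance), and each vertex of `G`
is joined to the apex by an edge of conductance `m` (resistance `1/m`). -/
noncomputable def coneLap {V : Type*} [Fintype V] [DecidableEq V]
    (G : SimpleGraph V) (m : ℝ) : Matrix (V ⊕ Unit) (V ⊕ Unit) ℝ :=
  letI := Classical.decRel G.Adj
  let W : Matrix (V ⊕ Unit) (V ⊕ Unit) ℝ := fun i j =>
    match i, j with
    | Sum.inl a, Sum.inl b => if G.Adj a b then 1 else 0
    | Sum.inl _, Sum.inr _ => m
    | Sum.inr _, Sum.inl _ => m
    | Sum.inr _, Sum.inr _ => 0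
  Matrix.of fun i j => (if i = j then ∑ k, W i k else 0) - W i j

/-- The `k`-dimensional hypercube graph `Q_k`. -/
def hypercube (k : ℕ) : SimpleGraph (Fin k → Bool) where
  Adj x y := (Finset.univ.filter fun i => x i ≠ y i).card = 1
  symm := by
    constructor
    intro x y h
    rw [← h]
    congr 1
    ext i
    simp [ne_comm]
  loopless := by constructor; intro x; simp

/-- The join `G + H` of two graphs on disjoint vertex sets. -/
def graphJoin {V W : Type*} (G : SimpleGraph V) (H : SimpleGraph W) :
    SimpleGraph (V ⊕ W) where
  Adj x y :=
    match x, y with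
    | Sum.inl a, Sum.inl b => G.Adj a b
    | Sum.inr a, Sum.inr b => H.Adj a b
    | Sum.inl _, Sum.inr _ => True
    | Sum.inr _, Sum.inl _ => True
  symm := by
    constructor
    rintro (a | a) (b | b) h
    · exact G.adj_symm h
    · trivial
    · trivial
    · exact H.adj_symm h
  loopless := by
    constructor
    rintro (a | a) h
    · exact G.irrefl h
    · exact H.irrefl h

/-!
For a symmetric real matrix `L`, the functional calculus of `x ↦ x⁻¹` satisfies the Penrose
conditions, so `L L⁺ L = L` and hence `(L y)ᵀ L⁺ (L y) = yᵀ L y`. Therefore, whenever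
`L y = e_u - e_v`, i.e. `y` is a potential driving a unit current from `u` to `v`, the effective
resistance is `y u - y v`. On `K_{m,n}` such potentials are explicit: `(e_u - e_v) / n` for
`u, v ∈ X`, `(e_u - e_v) / m` for `u, v ∈ Y`, and `e_u / n - e_v / m + 1_Y / (m n)` for
`u ∈ X`, `v ∈ Y`.
-/

namespace Matrix

variable {ι : Type*} [Fintype ι] [DecidableEq ι]

theorem IsSymm.exists_penrose_inverse {A : Matrix ι ι ℝ} (hA : A.IsSymm) :
    ∃ B : Matrix ι ι ℝ,
      A * B * A = A ∧ B * A * B = B ∧ (A * B)ᵀ = A * B ∧ (B * A)ᵀ = B * A := by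
  have hsa : IsSelfAdjoint A := isHermitian_iff_isSymm.mpr hA
  have mul_cfc (f g : ℝ → ℝ) : cfc f A * cfc g A = cfc (fun x => f x * g x) A :=
    (cfc_mul f g A (finite_real_spectrum.continuousOn f) (finite_real_spectrum.continuousOn g)).symm
  have transpose_cfc (f : ℝ → ℝ) : (cfc f A)ᵀ = cfc f A :=
    isHermitian_iff_isSymm.mp (cfc_predicate f A)
  rw [← cfc_id' ℝ A]
  -- `0⁻¹ = 0` makes `x ↦ x⁻¹` invert `A` on its range and vanish on its kernel.
  refine ⟨cfc (fun x : ℝ => x⁻¹) A, ?_, ?_, ?_, ?_⟩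
  · rw [mul_cfc, mul_cfc]
    exact cfc_congr fun x _ => mul_inv_mul_cancel x
  · rw [mul_cfc, mul_cfc]
    exact cfc_congr fun x _ => by simpa using mul_inv_mul_cancel x⁻¹
  · rw [mul_cfc, transpose_cfc]
  · rw [mul_cfc, transpose_cfc]

theorem IsSymm.mul_mpinv_mul_self {A : Matrix ι ι ℝ} (hA : A.IsSymm) : A * A.mpinv * A = A := by
  rw [mpinv, dif_pos hA.exists_penrose_inverse]
  exact hA.exists_penrose_inverse.choose_spec.1

theorem IsSymm.mulVec_dotProduct_mpinv_mulVec {A : Matrix ι ι ℝ} (hA : A.IsSymm)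
    (y : ι → ℝ) :
    (A *ᵥ y) ⬝ᵥ (A.mpinv *ᵥ (A *ᵥ y)) = y ⬝ᵥ (A *ᵥ y) := by
  rw [dotProduct_comm, dotProduct_mulVec, ← mulVec_transpose, hA.eq, mulVec_mulVec,
    mulVec_mulVec, hA.mul_mpinv_mul_self, dotProduct_comm]

end Matrix

theorem effRes_eq_sub_of_mulVec_eq {ι : Type*} [Fintype ι] [DecidableEq ι] {L : Matrix ι ι ℝ}
    (hL : L.IsSymm) {u v : ι} {y : ι → ℝ} (hy : L *ᵥ y = Pi.single u 1 - Pi.single v 1) :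
    effRes L u v = y u - y v := by
  rw [effRes, ← hy, hL.mulVec_dotProduct_mpinv_mulVec, hy, dotProduct_sub, dotProduct_single_one,
    dotProduct_single_one]

theorem isSymm_lapm {V : Type*} [Fintype V] [DecidableEq V] (G : SimpleGraph V) :
    (lapm G).IsSymm :=
  letI := Classical.decRel G.Adj
  SimpleGraph.isSymm_lapMatrix ℝ G

theorem resDist_eq_sub_of_lapm_mulVec_eq {V : Type*} [Fintype V] [DecidableEq V]
    {G : SimpleGraph V} {u v : V} {y : V → ℝ}
    (hy : lapm G *ᵥ y = Pi.single u 1 - Pi.single v 1) :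
    resDist G u v = y u - y v :=
  effRes_eq_sub_of_mulVec_eq (isSymm_lapm G) hy

section CompleteBipartite

variable {V W : Type*} [Fintype V] [Fintype W] [DecidableEq V] [DecidableEq W]

theorem lapm_completeBipartiteGraph_mulVec (y : V ⊕ W → ℝ) :
    lapm (completeBipartiteGraph V W) *ᵥ y =
      Sum.elim (fun a => Fintype.card W * y (.inl a) - ∑ b, y (.inr b))
        (fun b => Fintype.card V * y (.inr b) - ∑ a, y (.inl a)) := by
  ext (a | b) <;>
  rw [lapm, SimpleGraph.lapMatrix_mulVec_apply, ← SimpleGraph.card_neighborFinset_eq_degree,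
    SimpleGraph.neighborFinset_eq_filter, Finset.card_filter, Finset.sum_filter] <;>
  simp only [Fintype.sum_sum_type] <;> simp

theorem resDist_completeBipartiteGraph_inl_inl [Nonempty W] {i j : V} (hij : i ≠ j) :
    resDist (completeBipartiteGraph V W) (.inl i) (.inl j) = 2 / Fintype.card W := by
  have hW : (Fintype.card W : ℝ) ≠ 0 := by positivity
  rw [resDist_eq_sub_of_lapm_mulVec_eq
    (y := (Fintype.card W : ℝ)⁻¹ • (Pi.single (.inl i) 1 - Pi.single (.inl j) 1))]
  · simp only [Pi.smul_apply, Pi.sub_apply, Pi.single_eq_same, Pi.single_eq_of_ne, ne_eq,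
      Sum.inl.injEq, hij, hij.symm, not_false_eq_true, sub_zero, zero_sub, smul_eq_mul]
    ring
  · ext (a | b) <;> simp [lapm_completeBipartiteGraph_mulVec, Pi.single_apply, hW,
      ← Finset.mul_sum, Finset.sum_sub_distrib]

theorem resDist_completeBipartiteGraph_inr_inr [Nonempty V] {i j : W} (hij : i ≠ j) :
    resDist (completeBipartiteGraph V W) (.inr i) (.inr j) = 2 / Fintype.card V := by
  have hV : (Fintype.card V : ℝ) ≠ 0 := by positivity
  rw [resDist_eq_sub_of_lapm_mulVec_eq
    (y := (Fintype.card V : ℝ)⁻¹ • (Pi.single (.inr i) 1 - Pi.single (.inr j) 1))]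
  · simp only [Pi.smul_apply, Pi.sub_apply, Pi.single_eq_same, Pi.single_eq_of_ne, ne_eq,
      Sum.inr.injEq, hij, hij.symm, not_false_eq_true, sub_zero, zero_sub, smul_eq_mul]
    ring
  · ext (a | b) <;> simp [lapm_completeBipartiteGraph_mulVec, Pi.single_apply, hV,
      ← Finset.mul_sum, Finset.sum_sub_distrib]

theorem resDist_completeBipartiteGraph_inl_inr [Nonempty V] [Nonempty W] (i : V) (j : W) :
    resDist (completeBipartiteGraph V W) (.inl i) (.inr j) =
      (Fintype.card V + Fintype.card W - 1) / (Fintype.card V * Fintype.card W) := by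
  have hV : (Fintype.card V : ℝ) ≠ 0 := by positivity
  have hW : (Fintype.card W : ℝ) ≠ 0 := by positivity
  rw [resDist_eq_sub_of_lapm_mulVec_eq (y := Sum.elim
    (fun a => if a = i then (Fintype.card W : ℝ)⁻¹ else 0)
    (fun b => (Fintype.card W * Fintype.card V : ℝ)⁻¹ -
      if b = j then (Fintype.card V : ℝ)⁻¹ else 0))]
  · simp only [Sum.elim_inl, Sum.elim_inr, if_pos]
    field_simp
    ring
  · ext (a | b) <;> simp [lapm_completeBipartiteGraph_mulVec, Pi.single_apply, mul_sub, hV, hW,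
      mul_left_comm (Fintype.card W : ℝ)]

end CompleteBipartite

/-- Resistance distances in the complete bipartite graph `K_{m,n}`. -/
theorem resDist_completeBipartite (m n : ℕ) (hm : 0 < m) (hn : 0 < n) :
    (∀ i j : Fin m, i ≠ j →
      resDist (completeBipartiteGraph (Fin m) (Fin n)) (Sum.inl i) (Sum.inl j) = 2 / n) ∧
    (∀ i j : Fin n, i ≠ j →
      resDist (completeBipartiteGraph (Fin m) (Fin n)) (Sum.inr i) (Sum.inr j) = 2 / m) ∧
    (∀ (i : Fin m) (j : Fin n),
      resDist (completeBipartiteGraph (Fin m) (Fin n)) (Sum.inl i) (Sum.inr j)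
        = ((m : ℝ) + n - 1) / (m * n)) := by
  have : Nonempty (Fin m) := Fin.pos_iff_nonempty.mp hm
  have : Nonempty (Fin n) := Fin.pos_iff_nonempty.mp hn
  refine ⟨fun i j hij => ?_, fun i j hij => ?_, fun i j => ?_⟩
  · simpa using resDist_completeBipartiteGraph_inl_inl (W := Fin n) hij
  · simpa using resDist_completeBipartiteGraph_inr_inr (V := Fin m) hij
  · simpa using resDist_completeBipartiteGraph_inl_inr i j
end

section
/- Let G and H be connected graphs on n and m vertices with Laplacian eigenvalues λ_1,...,λ_{n-1} > 0, λ_n = 0 and μ_1,...,μ_{m-1} > 0, μ_m = 0, and corresponding orthonormal eigenvectors Ψ_1,...,Ψ_n and Φ_1,...,Φ_m (with Ψ_n, Φ_m the normalized all-ones vectors). Then for u,v in V(G) and x,y in V(H), the resistance distance in the Cartesian product satisfies R_{G□H}[(u,x),(v,y)] = (1/m)·R_G[u,v] + (1/n)·R_H[x,y] + Σ_{p=1}^{n-1} Σ_{q=1}^{m-1} (Ψ_{pu}Φ_{qx} − Ψ_{pv}Φ_{qy})² / (λ_p + μ_q). -/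
open Matrix Finset

/-!
Let `U` be the matrix whose rows are the orthonormal eigenvectors of `L_G`, the normalized
all-ones vector included. Counting rows makes `U` orthogonal, so `L_G = Uᵀ diag(λ) U` and, by
the Penrose conditions, `L_G⁺ = Uᵀ diag(λ)⁻¹ U` with `0⁻¹ = 0` on the kernel; hence
`R_G[u,v] = ∑ᵢ (U i u - U i v)² / λᵢ`. Since `L_{G□H} = L_G ⊗ I + I ⊗ L_H`, the orthogonal
matrix `U ⊗ U'` diagonalizes it with eigenvalues `λᵢ + μⱼ`, and the same formula applies. The
pairs with one all-ones factor give `R_G / m` and `R_H / n`, the remaining pairs the double sum.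
-/

open scoped Kronecker

namespace Matrix

variable {ι V : Type*} [Fintype V]

theorem eq_of_penrose {A B C : Matrix V V ℝ}
    (hB₁ : A * B * A = A) (hB₂ : B * A * B = B) (hB₃ : (A * B)ᵀ = A * B) (hB₄ : (B * A)ᵀ = B * A)
    (hC₁ : A * C * A = A) (hC₂ : C * A * C = C) (hC₃ : (A * C)ᵀ = A * C)
    (hC₄ : (C * A)ᵀ = C * A) : B = C := by
  have hAB : A * B = A * C := by
    calc A * B = (A * C * A * B)ᵀ := by rw [hC₁, hB₃]
      _ = (A * B)ᵀ * (A * C)ᵀ := by rw [← transpose_mul, Matrix.mul_assoc]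
      _ = A * C := by rw [hB₃, hC₃, ← Matrix.mul_assoc, hB₁]
  have hBA : B * A = C * A := by
    calc B * A = (B * A * C * A)ᵀ := by
          rw [show B * A * C * A = B * (A * C * A) by simp only [Matrix.mul_assoc], hC₁, hB₄]
      _ = (C * A)ᵀ * (B * A)ᵀ := by rw [← transpose_mul, Matrix.mul_assoc]
      _ = C * A := by rw [hB₄, hC₄, Matrix.mul_assoc, ← Matrix.mul_assoc A, hB₁]
  calc B = C * A * B := by rw [← hBA, hB₂]
    _ = C := by rw [Matrix.mul_assoc, hAB, ← Matrix.mul_assoc, hC₂]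

theorem mpinv_eq_of_penrose [DecidableEq V] {A B : Matrix V V ℝ}
    (h₁ : A * B * A = A) (h₂ : B * A * B = B) (h₃ : (A * B)ᵀ = A * B) (h₄ : (B * A)ᵀ = B * A) :
    A.mpinv = B := by
  have hex : ∃ C : Matrix V V ℝ,
      A * C * A = A ∧ C * A * C = C ∧ (A * C)ᵀ = A * C ∧ (C * A)ᵀ = C * A :=
    ⟨B, h₁, h₂, h₃, h₄⟩
  obtain ⟨hC₁, hC₂, hC₃, hC₄⟩ := hex.choose_spec
  rw [mpinv, dif_pos hex]
  exact eq_of_penrose hC₁ hC₂ hC₃ hC₄ h₁ h₂ h₃ h₄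

variable [Fintype ι] [DecidableEq ι] {U : Matrix ι V ℝ}

theorem transpose_mul_diagonal_mul_mul_transpose_mul_diagonal_mul (hU : U * Uᵀ = 1)
    (a b : ι → ℝ) :
    (Uᵀ * diagonal a * U) * (Uᵀ * diagonal b * U) = Uᵀ * diagonal (a * b) * U := by
  calc (Uᵀ * diagonal a * U) * (Uᵀ * diagonal b * U)
      = Uᵀ * diagonal a * (U * Uᵀ) * diagonal b * U := by simp only [Matrix.mul_assoc]
    _ = Uᵀ * diagonal (a * b) * U := by
      rw [hU, Matrix.mul_one, Matrix.mul_assoc _ (diagonal a), diagonal_mul_diagonal]; rfl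

omit [Fintype V] in
theorem transpose_transpose_mul_diagonal_mul (d : ι → ℝ) :
    (Uᵀ * diagonal d * U)ᵀ = Uᵀ * diagonal d * U := by
  rw [transpose_mul, transpose_mul, diagonal_transpose, transpose_transpose, Matrix.mul_assoc]

/-- `d⁻¹` vanishes where `d` does, which is what the pseudoinverse does on the kernel. -/
theorem mpinv_transpose_mul_diagonal_mul [DecidableEq V] (hU : U * Uᵀ = 1) (d : ι → ℝ) :
    (Uᵀ * diagonal d * U).mpinv = Uᵀ * diagonal d⁻¹ * U := by
  have hd : d * d⁻¹ * d = d := funext fun i => mul_inv_mul_cancel (d i)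
  have hd' : d⁻¹ * d * d⁻¹ = d⁻¹ := funext fun i => by simpa using mul_inv_mul_cancel (d i)⁻¹
  refine mpinv_eq_of_penrose ?_ ?_ ?_ ?_ <;>
    simp only [transpose_mul_diagonal_mul_mul_transpose_mul_diagonal_mul hU,
      transpose_transpose_mul_diagonal_mul, hd, hd']

theorem eq_transpose_mul_diagonal_mul_of_mulVec_eq_smul [DecidableEq V] (hU : Uᵀ * U = 1)
    {L : Matrix V V ℝ} {d : ι → ℝ} (hL : ∀ i, L *ᵥ U i = d i • U i) :
    L = Uᵀ * diagonal d * U := by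
  have hLU : L * Uᵀ = Uᵀ * diagonal d := by
    ext a i
    rw [mul_diagonal]
    simpa [mul_apply, mulVec, dotProduct, mul_comm] using congrFun (hL i) a
  calc L = L * (Uᵀ * U) := by rw [hU, Matrix.mul_one]
    _ = Uᵀ * diagonal d * U := by rw [← Matrix.mul_assoc, hLU]

omit [Fintype V] in
theorem kronecker_one_add_one_kronecker_of_transpose_mul_self_eq_one
    {κ W : Type*} [Fintype κ] [DecidableEq κ] [Fintype W] [DecidableEq W] [DecidableEq V]
    {U' : Matrix κ W ℝ} (hU : Uᵀ * U = 1) (hU' : U'ᵀ * U' = 1) (a : ι → ℝ) (b : κ → ℝ) :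
    (Uᵀ * diagonal a * U) ⊗ₖ (1 : Matrix W W ℝ) + (1 : Matrix V V ℝ) ⊗ₖ (U'ᵀ * diagonal b * U')
      = (U ⊗ₖ U')ᵀ * diagonal (fun ij : ι × κ => a ij.1 + b ij.2) * (U ⊗ₖ U') := by
  have h₁ : (1 : Matrix V V ℝ) = Uᵀ * diagonal (1 : ι → ℝ) * U := by simp [hU]
  have h₁' : (1 : Matrix W W ℝ) = U'ᵀ * diagonal (1 : κ → ℝ) * U' := by simp [hU']
  rw [h₁, h₁']
  simp only [mul_kronecker_mul, ← kroneckerMap_transpose, diagonal_kronecker_diagonal,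
    ← Matrix.mul_add, ← Matrix.add_mul, diagonal_add]
  simp

end Matrix

theorem effRes_transpose_mul_diagonal_mul {ι V : Type*} [Fintype ι] [DecidableEq ι] [Fintype V]
    [DecidableEq V] {U : Matrix ι V ℝ} (hU : U * Uᵀ = 1) (d : ι → ℝ) (u v : V) :
    effRes (Uᵀ * diagonal d * U) u v = ∑ i, (U i u - U i v) ^ 2 / d i := by
  have hUe : U *ᵥ (Pi.single u 1 - Pi.single v 1) = fun i => U i u - U i v := by
    ext i; simp [mulVec_sub]
  rw [effRes, mpinv_transpose_mul_diagonal_mul hU, ← mulVec_mulVec, ← mulVec_mulVec,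
    dotProduct_mulVec, vecMul_transpose, hUe]
  simp [dotProduct, mulVec_diagonal, div_eq_inv_mul, sq, mul_left_comm]

section Laplacian

variable {V : Type*} [Fintype V] [DecidableEq V]

theorem lapm_mulVec_const (G : SimpleGraph V) (r : ℝ) : lapm G *ᵥ (fun _ => r) = 0 := by
  have h : lapm G *ᵥ (fun _ => 1) = 0 := by
    let := Classical.decRel G.Adj
    exact G.lapMatrix_mulVec_const_eq_zero
  rw [show (fun _ : V => r) = r • fun _ => 1 by ext; simp, mulVec_smul, h, smul_zero]

theorem sum_eq_zero_of_lapm_mulVec_eq_smul (G : SimpleGraph V) {c : ℝ} {f : V → ℝ} (hc : c ≠ 0)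
    (hf : lapm G *ᵥ f = c • f) : ∑ a, f a = 0 := by
  have hsymm : (lapm G)ᵀ = lapm G := by
    let := Classical.decRel G.Adj
    exact G.isSymm_lapMatrix (R := ℝ)
  have h : c • ((fun _ => 1) ⬝ᵥ f) = 0 := by
    rw [← dotProduct_smul, ← hf, dotProduct_mulVec, ← hsymm, vecMul_transpose, lapm_mulVec_const,
      zero_dotProduct]
  simpa [dotProduct, hc] using h

theorem lapm_boxProd {W : Type*} [Fintype W] [DecidableEq W]
    (G : SimpleGraph V) (H : SimpleGraph W) :
    lapm (G □ H) = lapm G ⊗ₖ 1 + 1 ⊗ₖ lapm H := by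
  let := Classical.decRel G.Adj
  let := Classical.decRel H.Adj
  ext ⟨u, x⟩ ⟨v, y⟩
  simp only [lapm, SimpleGraph.lapMatrix, SimpleGraph.degMatrix, Matrix.sub_apply, diagonal_apply,
    SimpleGraph.adjMatrix_apply, Matrix.add_apply, kroneckerMap_apply, one_apply,
    SimpleGraph.degree_boxProd, SimpleGraph.boxProd_adj, Prod.mk.injEq]
  by_cases huv : u = v <;> by_cases hxy : x = y <;> simp [huv, hxy]

end Laplacian

section OnesRow

/-- The eigenbasis `Ψ` as a matrix of rows, the kernel vector `Ψ_n` indexed by `none`. -/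
noncomputable def withOnesRow {ι V : Type*} [Fintype V] (Psi : ι → V → ℝ) :
    Matrix (Option ι) V ℝ :=
  of fun i => i.elim (fun _ => (√(Fintype.card V))⁻¹) Psi

variable {ι V : Type*} [Fintype ι] [DecidableEq ι] [Fintype V] {Psi : ι → V → ℝ}

omit [Fintype ι] in
theorem withOnesRow_mul_transpose [Nonempty V] (hsum : ∀ p, ∑ a, Psi p a = 0)
    (horth : ∀ p p', Psi p ⬝ᵥ Psi p' = if p = p' then 1 else 0) :
    withOnesRow Psi * (withOnesRow Psi)ᵀ = 1 := by
  have hcard : (Fintype.card V : ℝ) ≠ 0 := by positivity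
  ext (_ | p) (_ | p')
  · simp only [withOnesRow, mul_apply, transpose_apply, of_apply, Option.elim_none, sum_const,
      card_univ, nsmul_eq_mul, ← mul_inv, Real.mul_self_sqrt (Nat.cast_nonneg _), one_apply_eq]
    exact mul_inv_cancel₀ hcard
  · simp [withOnesRow, mul_apply, ← mul_sum, hsum]
  · simp [withOnesRow, mul_apply, ← sum_mul, hsum]
  · simpa [withOnesRow, mul_apply, one_apply, dotProduct] using horth p p'

variable [DecidableEq V]

theorem transpose_mul_withOnesRow (hcard : Fintype.card ι + 1 = Fintype.card V)
    (hU : withOnesRow Psi * (withOnesRow Psi)ᵀ = 1) : (withOnesRow Psi)ᵀ * withOnesRow Psi = 1 :=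
  (mul_eq_one_comm_of_equiv (Fintype.equivOfCardEq (by simpa using hcard))).mp hU

theorem lapm_eq_withOnesRow (G : SimpleGraph V) {lam : ι → ℝ}
    (hU : (withOnesRow Psi)ᵀ * withOnesRow Psi = 1)
    (hPsi : ∀ p, lapm G *ᵥ Psi p = lam p • Psi p) :
    lapm G = (withOnesRow Psi)ᵀ * diagonal (Option.elim · 0 lam) * withOnesRow Psi := by
  refine eq_transpose_mul_diagonal_mul_of_mulVec_eq_smul hU ?_
  rintro (_ | p)
  · exact (lapm_mulVec_const G _).trans (zero_smul ℝ _).symm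
  · exact hPsi p

end OnesRow

theorem resDist_boxProd_spectral_general (n m : ℕ)
    (G : SimpleGraph (Fin n)) (H : SimpleGraph (Fin m))
    (lam : Fin (n - 1) → ℝ) (mu : Fin (m - 1) → ℝ)
    (Psi : Fin (n - 1) → Fin n → ℝ) (Phi : Fin (m - 1) → Fin m → ℝ)
    (hlam : ∀ p, 0 < lam p) (hmu : ∀ q, 0 < mu q)
    (hPsi : ∀ p, lapm G *ᵥ Psi p = lam p • Psi p)
    (hPhi : ∀ q, lapm H *ᵥ Phi q = mu q • Phi q)
    (hPsiOrth : ∀ p p', Psi p ⬝ᵥ Psi p' = if p = p' then 1 else 0)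
    (hPhiOrth : ∀ q q', Phi q ⬝ᵥ Phi q' = if q = q' then 1 else 0) :
    ∀ (u v : Fin n) (x y : Fin m),
      resDist (G.boxProd H) (u, x) (v, y)
        = (1 / m) * resDist G u v + (1 / n) * resDist H x y
          + ∑ p : Fin (n - 1), ∑ q : Fin (m - 1),
              (Psi p u * Phi q x - Psi p v * Phi q y) ^ 2 / (lam p + mu q) := by
  intro u v x y
  have : Nonempty (Fin n) := ⟨u⟩
  have : Nonempty (Fin m) := ⟨x⟩
  have hUG := withOnesRow_mul_transpose
    (fun p => sum_eq_zero_of_lapm_mulVec_eq_smul G (hlam p).ne' (hPsi p)) hPsiOrth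
  have hUH := withOnesRow_mul_transpose
    (fun q => sum_eq_zero_of_lapm_mulVec_eq_smul H (hmu q).ne' (hPhi q)) hPhiOrth
  have hUG' := transpose_mul_withOnesRow (by simp [Nat.sub_add_cancel u.pos]) hUG
  have hUH' := transpose_mul_withOnesRow (by simp [Nat.sub_add_cancel x.pos]) hUH
  have hLG := lapm_eq_withOnesRow G hUG' hPsi
  have hLH := lapm_eq_withOnesRow H hUH' hPhi
  have hL := lapm_boxProd G H
  rw [hLG, hLH, kronecker_one_add_one_kronecker_of_transpose_mul_self_eq_one hUG' hUH'] at hL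
  have hU : (withOnesRow Psi ⊗ₖ withOnesRow Phi) * (withOnesRow Psi ⊗ₖ withOnesRow Phi)ᵀ = 1 := by
    rw [← kroneckerMap_transpose, ← mul_kronecker_mul, hUG, hUH, one_kronecker_one]
  have hsq (k : ℕ) : ((√(k : ℝ))⁻¹) ^ 2 = (k : ℝ)⁻¹ := by rw [inv_pow, Real.sq_sqrt k.cast_nonneg]
  simp only [resDist]
  rw [hL, hLG, hLH, effRes_transpose_mul_diagonal_mul hU, effRes_transpose_mul_diagonal_mul hUG,
    effRes_transpose_mul_diagonal_mul hUH]
  -- Split off the all-ones rows; the `(none, none)` term is `0 ^ 2 / 0`.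
  simp only [Fintype.sum_prod_type, Fintype.sum_option, kroneckerMap_apply, withOnesRow, of_apply,
    Option.elim_none, Option.elim_some, sub_self, ne_eq, OfNat.ofNat_ne_zero, not_false_eq_true,
    zero_pow, zero_div, add_zero, zero_add, ← mul_sub, ← sub_mul, mul_pow, hsq, sum_add_distrib,
    mul_sum, Fintype.card_fin]
  ring_nf

/-- Resistance distances in a Cartesian product in terms of spectral data of the factors. -/
theorem resDist_boxProd_spectral (n m : ℕ) (hn : 0 < n) (hm : 0 < m)
    (G : SimpleGraph (Fin n)) (H : SimpleGraph (Fin m))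
    (hG : G.Connected) (hH : H.Connected)
    (lam : Fin (n - 1) → ℝ) (mu : Fin (m - 1) → ℝ)
    (Psi : Fin (n - 1) → Fin n → ℝ) (Phi : Fin (m - 1) → Fin m → ℝ)
    (hlam : ∀ p, 0 < lam p) (hmu : ∀ q, 0 < mu q)
    (hPsi : ∀ p, lapm G *ᵥ Psi p = lam p • Psi p)
    (hPhi : ∀ q, lapm H *ᵥ Phi q = mu q • Phi q)
    (hPsiOrth : ∀ p p', Psi p ⬝ᵥ Psi p' = if p = p' then 1 else 0)
    (hPhiOrth : ∀ q q', Phi q ⬝ᵥ Phi q' = if q = q' then 1 else 0) :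
    ∀ (u v : Fin n) (x y : Fin m),
      resDist (G.boxProd H) (u, x) (v, y)
        = (1 / m) * resDist G u v + (1 / n) * resDist H x y
          + ∑ p : Fin (n - 1), ∑ q : Fin (m - 1),
              (Psi p u * Phi q x - Psi p v * Phi q y) ^ 2 / (lam p + mu q) :=
  resDist_boxProd_spectral_general n m G H lam mu Psi Phi hlam hmu hPsi hPhi hPsiOrth hPhiOrth
end

section
/- In the ladder graph L_n = P_n □ K_2 (n ≥ 2), the difference R_{L_n}[(a_1,c_1),(a_n,c_2)] − R_{L_n}[(a_1,c_1),(a_n,c_1)] equals 2√3/(a^n − b^n) where a = 2+√3 and b = 2−√3; in particular this difference is positive. -/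
open Matrix Finset

/-! With `B = L⁺` and `e_xy = e_x - e_y`, the splitting `e_uw = e_uv + e_vw` and the symmetry of
`B` give `R(u,w) - R(u,v) = 2 y_u - y_v - y_w` for `y = B e_vw`, a potential of the unit current
from `v` to `w`. For a connected graph `L⁺ = (L + J/N)⁻¹ - J/N`, so `y` may be replaced by any
solution of `L x = e_vw`. On the ladder, the current from `(a_n, c_1)` to `(a_n, c_2)` has the
antisymmetric potential `x (a_k, c_j) = ±ψ_k`, where `(L_{P_n} + 2) ψ = e_{a_n}` is a three-term
recurrence with characteristic roots `2 ± √3`; the difference is therefore `2 ψ_1`. -/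

namespace Matrix

variable {m : Type*} [Fintype m]

theorem eq_of_penrose_s7 {A B C : Matrix m m ℝ}
    (hB1 : A * B * A = A) (hB2 : B * A * B = B) (hB3 : (A * B)ᵀ = A * B)
    (hB4 : (B * A)ᵀ = B * A)
    (hC1 : A * C * A = A) (hC2 : C * A * C = C) (hC3 : (A * C)ᵀ = A * C)
    (hC4 : (C * A)ᵀ = C * A) :
    B = C := by
  have hAB : A * B = A * C := by
    calc A * B = Bᵀ * Aᵀ := by rw [← transpose_mul, hB3]
      _ = Bᵀ * (A * C * A)ᵀ := by rw [hC1]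
      _ = (A * B)ᵀ * (A * C) := by rw [transpose_mul (A * C) A, hC3, transpose_mul, mul_assoc]
      _ = A * B * A * C := by rw [hB3, ← mul_assoc]
      _ = A * C := by rw [hB1]
  have hCA : C * A = B * A := by
    calc C * A = (C * A)ᵀ * (B * A)ᵀ := by
          rw [hC4, hB4, ← mul_assoc, mul_assoc C A B, mul_assoc C, hB1]
      _ = (B * (A * C * A))ᵀ := by rw [← transpose_mul]; simp only [mul_assoc]
      _ = B * A := by rw [hC1, hB4]
  calc B = C * (A * B) := by rw [← mul_assoc, hCA, hB2]
    _ = C := by rw [hAB, ← mul_assoc, hC2]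

variable [DecidableEq m]

theorem mpinv_eq_of_penrose_s7 {A B : Matrix m m ℝ}
    (h1 : A * B * A = A) (h2 : B * A * B = B) (h3 : (A * B)ᵀ = A * B) (h4 : (B * A)ᵀ = B * A) :
    A.mpinv = B := by
  have hex : ∃ B : Matrix m m ℝ,
      A * B * A = A ∧ B * A * B = B ∧ (A * B)ᵀ = A * B ∧ (B * A)ᵀ = B * A :=
    ⟨B, h1, h2, h3, h4⟩
  obtain ⟨c1, c2, c3, c4⟩ := hex.choose_spec
  rw [mpinv, dif_pos hex]
  exact eq_of_penrose_s7 c1 c2 c3 c4 h1 h2 h3 h4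

theorem mpinv_eq_of_mul_eq_one_sub {A B P : Matrix m m ℝ} (hP : Pᵀ = P) (hPA : P * A = 0)
    (hPB : P * B = 0) (hAB : A * B = 1 - P) (hBA : B * A = 1 - P) :
    A.mpinv = B := by
  have hsymm : (1 - P)ᵀ = 1 - P := by rw [transpose_sub, transpose_one, hP]
  refine mpinv_eq_of_penrose_s7 ?_ ?_ (hAB ▸ hsymm) (hBA ▸ hsymm)
  · rw [hAB, sub_mul, one_mul, hPA, sub_zero]
  · rw [hBA, sub_mul, one_mul, hPB, sub_zero]

variable {A P : Matrix m m ℝ}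

theorem inv_add_mul_eq_one_sub (hPP : P * P = P) (hAP : A * P = 0) (h : IsUnit (A + P).det) :
    (A + P)⁻¹ * A = 1 - P := by
  have hP : (A + P)⁻¹ * P = P := by
    calc (A + P)⁻¹ * P = (A + P)⁻¹ * ((A + P) * P) := by rw [add_mul, hAP, hPP, zero_add]
      _ = P := by rw [← Matrix.mul_assoc, nonsing_inv_mul _ h, Matrix.one_mul]
  calc (A + P)⁻¹ * A = (A + P)⁻¹ * (A + P) - (A + P)⁻¹ * P := by rw [Matrix.mul_add]; abel
    _ = 1 - P := by rw [nonsing_inv_mul _ h, hP]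

theorem transpose_inv_add_sub (hA : Aᵀ = A) (hP : Pᵀ = P) :
    ((A + P)⁻¹ - P)ᵀ = (A + P)⁻¹ - P := by
  rw [transpose_sub, transpose_nonsing_inv, transpose_add, hA, hP]

theorem mpinv_eq_inv_add_sub (hA : Aᵀ = A) (hP : Pᵀ = P) (hPP : P * P = P) (hAP : A * P = 0)
    (h : IsUnit (A + P).det) :
    A.mpinv = (A + P)⁻¹ - P := by
  set B := (A + P)⁻¹ - P
  have hPA : P * A = 0 := by rw [← hA, ← hP, ← transpose_mul, hAP, transpose_zero]
  have hBA : B * A = 1 - P := by rw [sub_mul, hPA, sub_zero, inv_add_mul_eq_one_sub hPP hAP h]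
  have hAB : A * B = 1 - P := by
    have hB : Bᵀ = B := transpose_inv_add_sub hA hP
    rw [← hA, ← hB, ← transpose_mul, hBA, transpose_sub, hP, transpose_one]
  have hPB : P * B = 0 := by
    calc P * B = (A + P) * B - A * B := by rw [Matrix.add_mul]; abel
      _ = 0 := by rw [Matrix.mul_sub, mul_nonsing_inv _ h, Matrix.add_mul, hAP, hPP, zero_add,
        hAB, sub_self]
  exact mpinv_eq_of_mul_eq_one_sub hP hPA hPB hAB hBA

end Matrix

theorem effRes_sub_effRes {m : Type*} [Fintype m] [DecidableEq m] {L : Matrix m m ℝ}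
    (hL : L.mpinvᵀ = L.mpinv) {u v w : m} {y : m → ℝ}
    (hy : L.mpinv *ᵥ (Pi.single v 1 - Pi.single w 1) = y) :
    effRes L u w - effRes L u v = 2 * y u - y v - y w := by
  set d : m → ℝ := Pi.single v 1 - Pi.single w 1
  set e : m → ℝ := Pi.single u 1 - Pi.single v 1
  have hsplit : (Pi.single u 1 - Pi.single w 1 : m → ℝ) = e + d := by
    simp only [e, d, sub_add_sub_cancel]
  have hsymm : d ⬝ᵥ (L.mpinv *ᵥ e) = e ⬝ᵥ y := by
    rw [dotProduct_mulVec, ← Matrix.mulVec_transpose, hL, hy, dotProduct_comm]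
  have hey : e ⬝ᵥ y = y u - y v := by simp [e, sub_dotProduct]
  have hdy : d ⬝ᵥ y = y v - y w := by simp [d, sub_dotProduct]
  simp only [effRes, hsplit, Matrix.mulVec_add, dotProduct_add, add_dotProduct, hsymm, hy, hey,
    hdy]
  ring

section meanMatrix

variable {V : Type*} [Fintype V]

noncomputable def meanMatrix (V : Type*) [Fintype V] : Matrix V V ℝ :=
  Matrix.of fun _ _ => (Fintype.card V : ℝ)⁻¹

theorem meanMatrix_mulVec (x : V → ℝ) :
    meanMatrix V *ᵥ x = fun _ => (Fintype.card V : ℝ)⁻¹ * ∑ v, x v := by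
  ext
  simp [meanMatrix, Matrix.mulVec, dotProduct, mul_sum]

theorem transpose_meanMatrix : (meanMatrix V)ᵀ = meanMatrix V := rfl

theorem meanMatrix_mul_self [Nonempty V] : meanMatrix V * meanMatrix V = meanMatrix V := by
  ext
  simp [meanMatrix, Matrix.mul_apply]

end meanMatrix

namespace SimpleGraph

variable {V : Type*} [Fintype V] [DecidableEq V] (G : SimpleGraph V)

theorem lapm_eq_lapMatrix [DecidableRel G.Adj] : lapm G = G.lapMatrix ℝ := by
  unfold lapm
  congr!

theorem transpose_lapm : (lapm G)ᵀ = lapm G := by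
  classical
  rw [lapm_eq_lapMatrix]
  exact G.isSymm_lapMatrix ℝ

theorem lapm_mul_meanMatrix : lapm G * meanMatrix V = 0 := by
  classical
  ext i j
  have h := congrFun (G.lapMatrix_mulVec_const_eq_zero (R := ℝ)) i
  simp only [Matrix.mulVec, dotProduct, mul_one, Pi.zero_apply] at h
  simp [meanMatrix, Matrix.mul_apply, ← sum_mul, lapm_eq_lapMatrix, h]

theorem meanMatrix_mul_lapm : meanMatrix V * lapm G = 0 := by
  rw [← transpose_lapm, ← transpose_meanMatrix, ← Matrix.transpose_mul, lapm_mul_meanMatrix,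
    Matrix.transpose_zero]

theorem lapm_mulVec_apply [DecidableRel G.Adj] (x : V → ℝ) (v : V) :
    (lapm G *ᵥ x) v = G.degree v * x v - ∑ u ∈ G.neighborFinset v, x u := by
  rw [lapm_eq_lapMatrix, lapMatrix_mulVec_apply]

theorem lapm_mulVec_apply_eq_sum [DecidableRel G.Adj] (x : V → ℝ) (v : V) :
    (lapm G *ᵥ x) v = ∑ u, if G.Adj v u then x v - x u else 0 := by
  rw [lapm_mulVec_apply, ← sum_filter, ← neighborFinset_eq_filter, sum_sub_distrib, sum_const,
    card_neighborFinset_eq_degree, nsmul_eq_mul]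

variable {G}

theorem isUnit_det_lapm_add_meanMatrix (hG : G.Connected) :
    IsUnit (lapm G + meanMatrix V).det := by
  classical
  have := hG.nonempty
  rw [isUnit_iff_ne_zero, Ne, ← Matrix.exists_mulVec_eq_zero_iff]
  rintro ⟨x, hx0, hx⟩
  have hmean : meanMatrix V *ᵥ x = 0 := by
    simpa [Matrix.mulVec_mulVec, Matrix.mul_add, meanMatrix_mul_lapm, meanMatrix_mul_self]
      using congrArg (meanMatrix V *ᵥ ·) hx
  have hlap : G.lapMatrix ℝ *ᵥ x = 0 := by
    simpa [Matrix.add_mulVec, hmean, lapm_eq_lapMatrix] using hx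
  have hconst := (lapMatrix_mulVec_eq_zero_iff_forall_reachable G).mp hlap
  obtain ⟨v⟩ := hG.nonempty
  have hsum : ∑ u, x u = Fintype.card V * x v := by
    simp [fun u => hconst u v (hG.preconnected u v)]
  have hxv : x v = 0 := by
    simpa [meanMatrix_mulVec, hsum, Fintype.card_ne_zero] using congrFun hmean v
  exact hx0 (funext fun u => (hconst u v (hG.preconnected u v)).trans hxv)

theorem mpinv_lapm (hG : G.Connected) :
    (lapm G).mpinv = (lapm G + meanMatrix V)⁻¹ - meanMatrix V :=
  have := hG.nonempty
  Matrix.mpinv_eq_inv_add_sub (transpose_lapm G) transpose_meanMatrix meanMatrix_mul_self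
    (lapm_mul_meanMatrix G) (isUnit_det_lapm_add_meanMatrix hG)

theorem transpose_mpinv_lapm (hG : G.Connected) : (lapm G).mpinvᵀ = (lapm G).mpinv := by
  rw [mpinv_lapm hG]
  exact Matrix.transpose_inv_add_sub (transpose_lapm G) transpose_meanMatrix

theorem mpinv_lapm_mulVec_lapm_mulVec (hG : G.Connected) (x : V → ℝ) :
    (lapm G).mpinv *ᵥ (lapm G *ᵥ x) = x - meanMatrix V *ᵥ x := by
  have := hG.nonempty
  rw [Matrix.mulVec_mulVec, mpinv_lapm hG, Matrix.sub_mul, meanMatrix_mul_lapm, sub_zero,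
    Matrix.inv_add_mul_eq_one_sub meanMatrix_mul_self (lapm_mul_meanMatrix G)
      (isUnit_det_lapm_add_meanMatrix hG), Matrix.sub_mulVec, Matrix.one_mulVec]

/-- `x` is any potential of the unit current from `v` to `w`: no normalisation is needed, since
the right-hand side does not change when a constant is added to `x`. -/
theorem resDist_sub_resDist (hG : G.Connected) {u v w : V} {x : V → ℝ}
    (hx : lapm G *ᵥ x = Pi.single v 1 - Pi.single w 1) :
    resDist G u w - resDist G u v = 2 * x u - x v - x w := by
  rw [resDist, resDist, effRes_sub_effRes (transpose_mpinv_lapm hG)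
    (by rw [← hx, mpinv_lapm_mulVec_lapm_mulVec hG])]
  simp only [meanMatrix_mulVec, Pi.sub_apply]
  ring

theorem lapm_boxProd_mulVec_mul {α β : Type*} [Fintype α] [DecidableEq α] [Fintype β]
    [DecidableEq β] (G : SimpleGraph α) (H : SimpleGraph β) (f : α → ℝ) (g : β → ℝ)
    (p : α × β) :
    (lapm (G □ H) *ᵥ fun q => f q.1 * g q.2) p
      = (lapm G *ᵥ f) p.1 * g p.2 + f p.1 * (lapm H *ᵥ g) p.2 := by
  classical
  simp only [lapm_mulVec_apply, degree_boxProd, neighborFinset_boxProd, sum_disjUnion,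
    sum_product, sum_singleton, ← sum_mul, ← mul_sum]
  push_cast
  ring

theorem lapm_pathGraph_mulVec_apply {n : ℕ} (f : ℕ → ℝ) (i : Fin n) :
    (lapm (pathGraph n) *ᵥ fun j => f j) i
      = (if i.val + 1 < n then f i - f (i + 1) else 0)
        + (if i.val ≠ 0 then f i - f (i - 1) else 0) := by
  classical
  have hsplit : ∀ j : Fin n, (if (pathGraph n).Adj i j then f i - f j else 0)
      = (if j.val = i + 1 then f i - f j else 0)
        + (if i.val ≠ 0 then (if j.val = i - 1 then f i - f j else 0) else 0) := by
    intro j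
    rw [pathGraph_adj]
    split_ifs <;> first | (exfalso; omega) | ring
  rw [lapm_mulVec_apply_eq_sum, sum_congr rfl fun j _ => hsplit j, sum_add_distrib,
    Fin.sum_univ_eq_sum_range (fun j => if j = i + 1 then f i - f j else 0),
    Fin.sum_univ_eq_sum_range
      (fun j => if i.val ≠ 0 then (if j = i - 1 then f i - f j else 0) else 0),
    sum_ite_eq']
  have hlt : i.val - 1 < n := by omega
  by_cases h0 : i.val = 0 <;> simp [h0, hlt]

end SimpleGraph

open Real

theorem two_sub_sqrt_three_pow_lt {n : ℕ} (hn : n ≠ 0) : (2 - √3) ^ n < (2 + √3) ^ n := by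
  have h3 : √3 < 2 := by
    rw [sqrt_lt' two_pos]
    norm_num
  exact pow_lt_pow_left₀ (by linarith [sqrt_pos.2 three_pos]) (by linarith) hn

/-- The solution of `ψ (k - 1) - 4 ψ k + ψ (k + 1) = 0` with `ψ (-1) = ψ 0`, scaled so that
`3 ψ (n - 1) - ψ (n - 2) = 1`; here `2 ± √3` are the roots of `t² - 4t + 1`. -/
noncomputable def ladderPotential (n k : ℕ) : ℝ :=
  ((1 + √3) * (2 + √3) ^ k + (√3 - 1) * (2 - √3) ^ k)
    / (2 * ((2 + √3) ^ n - (2 - √3) ^ n))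

namespace ladderPotential

theorem zero (n : ℕ) : ladderPotential n 0 = √3 / ((2 + √3) ^ n - (2 - √3) ^ n) := by
  rw [ladderPotential, pow_zero, pow_zero, mul_one, mul_one,
    show 1 + √3 + (√3 - 1) = 2 * √3 by ring, mul_div_mul_left _ _ two_ne_zero]

theorem three_mul_zero_sub_one (n : ℕ) : 3 * ladderPotential n 0 - ladderPotential n 1 = 0 := by
  simp only [ladderPotential]
  ring

theorem add_two (n k : ℕ) :
    ladderPotential n (k + 2) = 4 * ladderPotential n (k + 1) - ladderPotential n k := by
  have h3 : √3 ^ 2 = 3 := sq_sqrt (by norm_num)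
  simp only [ladderPotential]
  linear_combination ((1 + √3) * (2 + √3) ^ k + (√3 - 1) * (2 - √3) ^ k)
    / (2 * ((2 + √3) ^ n - (2 - √3) ^ n)) * h3

theorem three_mul_last_sub (m : ℕ) :
    3 * ladderPotential (m + 2) (m + 1) - ladderPotential (m + 2) m = 1 := by
  have h3 : √3 ^ 2 = 3 := sq_sqrt (by norm_num)
  have hD : 2 * ((2 + √3) ^ (m + 2) - (2 - √3) ^ (m + 2)) ≠ 0 :=
    mul_ne_zero two_ne_zero (sub_pos.mpr (two_sub_sqrt_three_pow_lt (by omega))).ne'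
  rw [ladderPotential, ladderPotential, mul_div_assoc', div_sub_div_same, div_eq_one_iff_eq hD]
  linear_combination ((2 + √3) ^ m - (2 - √3) ^ m) * h3

end ladderPotential

namespace SimpleGraph

theorem lapm_pathGraph_mulVec_ladderPotential_add {n : ℕ} (hn : 2 ≤ n) (i : Fin n) :
    (lapm (pathGraph n) *ᵥ fun j => ladderPotential n j) i + 2 * ladderPotential n i
      = if i.val = n - 1 then 1 else 0 := by
  rw [lapm_pathGraph_mulVec_apply]
  obtain ⟨i, hi⟩ := i
  obtain ⟨m, rfl⟩ : ∃ m, n = m + 2 := ⟨n - 2, by omega⟩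
  rcases i with _ | k <;> simp only [Nat.add_sub_cancel]
  · rw [if_pos (by omega), if_neg (by omega), if_neg (by omega)]
    linarith [ladderPotential.three_mul_zero_sub_one (m + 2)]
  · obtain rfl | hk := eq_or_ne k m
    · rw [if_neg (by omega), if_pos (by omega), if_pos (by omega)]
      linarith [ladderPotential.three_mul_last_sub k]
    · rw [if_pos (by omega), if_pos (by omega), if_neg (by omega)]
      linarith [ladderPotential.add_two (m + 2) k]

theorem lapm_pathGraph_two_mulVec_sign :
    lapm (pathGraph 2) *ᵥ ![1, -1] = (2 : ℝ) • ![1, -1] := by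
  classical
  ext c
  fin_cases c <;> simp [lapm_mulVec_apply_eq_sum, Fin.sum_univ_two, pathGraph_adj] <;> norm_num

theorem lapm_ladder_mulVec {n : ℕ} (hn : 2 ≤ n) :
    lapm (pathGraph n □ pathGraph 2) *ᵥ (fun p => ladderPotential n p.1 * ![1, -1] p.2)
      = Pi.single (⟨n - 1, Nat.sub_one_lt (by omega)⟩, 0) 1
        - Pi.single (⟨n - 1, Nat.sub_one_lt (by omega)⟩, 1) 1 := by
  ext ⟨i, c⟩
  have hsource : (Pi.single (⟨n - 1, Nat.sub_one_lt (by omega)⟩, 0) 1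
      - Pi.single (⟨n - 1, Nat.sub_one_lt (by omega)⟩, 1) 1 : Fin n × Fin 2 → ℝ) (i, c)
      = (if i.val = n - 1 then 1 else 0) * ![1, -1] c := by
    fin_cases c <;> by_cases hi : i.val = n - 1 <;> simp [Pi.single_apply, Fin.ext_iff, hi]
  rw [lapm_boxProd_mulVec_mul _ _ (fun j : Fin n => ladderPotential n j),
    lapm_pathGraph_two_mulVec_sign, hsource, ← lapm_pathGraph_mulVec_ladderPotential_add hn i,
    Pi.smul_apply, smul_eq_mul]
  ring

end SimpleGraph

/-- In the ladder graph `L_n`, the difference between the diagonal and the same-rail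
resistance distances equals `2√3/(aⁿ − bⁿ) > 0` with `a = 2+√3`, `b = 2−√3`. -/
theorem resDist_ladder_diag_minus_straight (n : ℕ) (hn : 2 ≤ n) (a b : ℝ)
    (ha : a = 2 + Real.sqrt 3) (hb : b = 2 - Real.sqrt 3) :
    resDist ((SimpleGraph.pathGraph n).boxProd (SimpleGraph.pathGraph 2))
        (⟨0, by omega⟩, 0) (⟨n - 1, by omega⟩, 1)
      - resDist ((SimpleGraph.pathGraph n).boxProd (SimpleGraph.pathGraph 2))
          (⟨0, by omega⟩, 0) (⟨n - 1, by omega⟩, 0)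
      = 2 * Real.sqrt 3 / (a ^ n - b ^ n)
    ∧ 2 * Real.sqrt 3 / (a ^ n - b ^ n) > 0 := by
  subst ha hb
  obtain ⟨m, rfl⟩ : ∃ m, n = m + 1 := ⟨n - 1, by omega⟩
  have hG := (SimpleGraph.pathGraph_connected m).boxProd (SimpleGraph.pathGraph_connected 1)
  refine ⟨?_, div_pos (by positivity) (sub_pos.mpr (two_sub_sqrt_three_pow_lt m.succ_ne_zero))⟩
  rw [SimpleGraph.resDist_sub_resDist hG (SimpleGraph.lapm_ladder_mulVec hn)]
  simp only [Matrix.cons_val_zero, Matrix.cons_val_one, Matrix.cons_val_fin_one,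
    ladderPotential.zero]
  ring
end

section
/- For the weighted fan graphs C^m_{P_n} and C^m_{P_{n+1}} (apex b joined with conductance m > 1 to every vertex of the path), the difference of end-to-end effective resistances satisfies 0 < R_{C^m_{P_{n+1}}}[a_1, a_{n+1}] − R_{C^m_{P_n}}[a_1, a_n] < 2/m^n. -/
open Matrix Finset

/-!
Let `μ ∈ (0, 1)` be the root of `μ² + 1 = (m + 2) μ`. On the fan over `P_N`, ground the apex and
put the potential `x_i = μ^(i+1) - μ^(N-i)` at `a_(i+1)`. It satisfies `x_(i-1) + x_(i+1) = (m + 2) x_i`,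
so Kirchhoff's law holds at interior vertices; it is antisymmetric under `i ↦ N - 1 - i`, so the
apex receives no net current; and it injects the current `(1 - μ)(1 + μ^N)` at `a_1` and extracts
it at `a_N`. Hence `R_N = 2(μ - μ^N) / ((1 - μ)(1 + μ^N))` and
`R_(n+1) - R_n = 2 μ^n (1 + μ) / ((1 + μ^(n+1))(1 + μ^n)) > 0`. Since `m μ = (1 - μ)²`, this increment
times `m^n` is less than `2 (1 - μ)^(2n) (1 + μ) ≤ 2 (1 - μ)(1 - μ²) < 2`.
-/

namespace Matrix

variable {n : Type*} [Fintype n] [DecidableEq n]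

/-- Conjugating by the unitary that diagonalizes `A` reduces the Penrose conditions to those of
`diagonal d` and `diagonal d⁻¹`, which hold entrywise because `0⁻¹ = 0`. -/
theorem exists_penrose_of_isSymm {A : Matrix n n ℝ} (hA : A.IsSymm) :
    ∃ B : Matrix n n ℝ,
      A * B * A = A ∧ B * A * B = B ∧ (A * B)ᵀ = A * B ∧ (B * A)ᵀ = B * A := by
  obtain ⟨φ, d, rfl⟩ :
      ∃ (φ : Matrix n n ℝ ≃⋆ₐ[ℝ] Matrix n n ℝ) (d : n → ℝ), A = φ (diagonal d) :=
    ⟨_, _, (isHermitian_iff_isSymm.mpr hA).spectral_theorem⟩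
  have hφ : ∀ X, (φ X)ᵀ = φ Xᵀ := fun X => by
    simpa only [star_eq_conjTranspose, conjTranspose_eq_transpose_of_trivial] using
      (map_star φ X).symm
  refine ⟨φ (diagonal d⁻¹), ?_⟩
  simpa [← map_mul, hφ] using fun i => mul_inv_mul_cancel (d i)⁻¹

theorem mul_mpinv_mul_self_of_isSymm {A : Matrix n n ℝ} (hA : A.IsSymm) :
    A * A.mpinv * A = A := by
  have h := exists_penrose_of_isSymm hA
  rw [mpinv, dif_pos h]
  exact h.choose_spec.1

end Matrix

theorem effRes_eq_of_mulVec_eq {n : Type*} [Fintype n] [DecidableEq n] {L : Matrix n n ℝ}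
    (hL : L.IsSymm) {u v : n} {x : n → ℝ} {c : ℝ} (hc : c ≠ 0)
    (hx : L *ᵥ x = c • (Pi.single u 1 - Pi.single v 1)) :
    effRes L u v = (x u - x v) / c := by
  set y := c⁻¹ • x
  have hy : L *ᵥ y = Pi.single u 1 - Pi.single v 1 := by
    rw [mulVec_smul, hx, smul_smul, inv_mul_cancel₀ hc, one_smul]
  calc effRes L u v = y ⬝ᵥ ((L * L.mpinv * L) *ᵥ y) := by
        rw [effRes, ← hy, ← mulVec_mulVec, ← mulVec_mulVec, dotProduct_mulVec y,
          ← mulVec_transpose, hL.eq]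
    _ = y u - y v := by
        rw [L.mul_mpinv_mul_self_of_isSymm hL, hy]
        simp [dotProduct_sub, dotProduct_single]
    _ = (x u - x v) / c := by
        simp only [y, Pi.smul_apply, smul_eq_mul]
        ring

section coneLap

variable {V : Type*} [Fintype V] [DecidableEq V] (G : SimpleGraph V) (m : ℝ)

theorem coneLap_isSymm : (coneLap G m).IsSymm := by
  refine IsSymm.ext fun i j => ?_
  rcases i with a | _ <;> rcases j with b | _
  · by_cases h : a = b
    · rw [h]
    · by_cases hab : G.Adj a b <;> simp [coneLap, h, Ne.symm h, hab, G.adj_comm b a]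
  all_goals simp [coneLap]

-- `coneLap` decides adjacency classically; so do this lemma and `sum_pathGraph_adj_ite`.
open Classical in
theorem coneLap_mulVec_inl (y : V ⊕ Unit → ℝ) (a : V) :
    (coneLap G m *ᵥ y) (Sum.inl a) =
      ∑ b, (if G.Adj a b then y (Sum.inl a) - y (Sum.inl b) else 0)
        + m * (y (Sum.inl a) - y (Sum.inr ())) := by
  simp only [mulVec, dotProduct, coneLap, Fintype.sum_sum_type, univ_unique, sum_singleton,
    of_apply, sum_boole, sub_mul, ite_mul, zero_mul, sum_sub_distrib, sum_ite_eq, mem_univ,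
    ↓reduceIte, one_mul, ← sum_filter, sum_const, nsmul_eq_mul]
  ring

theorem coneLap_mulVec_inr (y : V ⊕ Unit → ℝ) :
    (coneLap G m *ᵥ y) (Sum.inr ()) = m * ∑ b, (y (Sum.inr ()) - y (Sum.inl b)) := by
  simp only [mulVec, dotProduct, coneLap, Fintype.sum_sum_type, univ_unique, sum_singleton,
    of_apply, sum_const, card_univ, nsmul_eq_mul, add_zero, sub_mul, ite_mul, zero_mul,
    sum_sub_distrib, sum_ite_eq, mem_univ, ↓reduceIte, mul_sub, mul_sum]
  ring

end coneLap

open Classical in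
theorem sum_pathGraph_adj_ite {N : ℕ} (a : Fin N) (f : ℕ → ℝ) :
    ∑ b : Fin N, (if (SimpleGraph.pathGraph N).Adj a b then f b else 0) =
      (if (a : ℕ) + 1 < N then f (a + 1) else 0) + (if (a : ℕ) ≠ 0 then f (a - 1) else 0) := by
  have hsplit : ∀ i : ℕ, (if (a : ℕ) + 1 = i ∨ i + 1 = a then f i else 0) =
      (if (a : ℕ) + 1 = i then f i else 0) +
        (if (a : ℕ) - 1 = i ∧ (a : ℕ) ≠ 0 then f i else 0) := by
    intro i
    split_ifs <;> first | omega | simp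
  simp only [SimpleGraph.pathGraph_adj]
  rw [Fin.sum_univ_eq_sum_range (fun i => if (a : ℕ) + 1 = i ∨ i + 1 = a then f i else 0),
    sum_congr rfl fun i _ => hsplit i, sum_add_distrib, sum_ite_eq]
  by_cases h₀ : (a : ℕ) = 0
  · simp [h₀]
  · simp [h₀, show (a : ℕ) - 1 < N by omega]

/-- The potential at the path vertex `i : Fin N` (the paper's `a_(i+1)`) of the fan over `P_N`. -/
def fanPotential (μ : ℝ) (N i : ℕ) : ℝ := μ ^ (i + 1) - μ ^ (N - i)

theorem fanPotential_kirchhoff {μ m : ℝ} (hq : μ ^ 2 + 1 = (m + 2) * μ) {N a : ℕ}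
    (ha : a < N) :
    (if a + 1 < N then fanPotential μ N a - fanPotential μ N (a + 1) else 0)
        + (if a ≠ 0 then fanPotential μ N a - fanPotential μ N (a - 1) else 0)
        + m * fanPotential μ N a
      = (1 - μ) * (1 + μ ^ N) * ((if a = 0 then 1 else 0) - (if a = N - 1 then 1 else 0)) := by
  obtain ⟨k, rfl⟩ : ∃ k, N = a + k + 1 := ⟨N - a - 1, by omega⟩
  rcases a with _ | a <;> rcases k with _ | k
  · simp [fanPotential]
  · simp only [zero_add, lt_add_iff_pos_left, Order.lt_add_one_iff, zero_le, ↓reduceIte,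
      fanPotential, pow_one, tsub_zero, Nat.reduceAdd, add_tsub_cancel_right, ne_eq,
      not_true_eq_false, add_zero, Nat.right_eq_add, Nat.add_eq_zero_iff, one_ne_zero, and_false,
      mul_one]
    linear_combination (μ ^ (k + 1) - 1) * hq
  · simp only [add_zero, lt_self_iff_false, ↓reduceIte, ne_eq, Nat.add_eq_zero_iff, one_ne_zero,
      and_false, not_false_eq_true, fanPotential, add_tsub_cancel_left, pow_one,
      add_tsub_cancel_right, show a + 1 + 1 - a = 2 by omega, zero_add, zero_sub, mul_neg, mul_one]
    linear_combination (1 - μ ^ (a + 1)) * hq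
  · simp only [Order.lt_add_one_iff, add_le_add_iff_left, le_add_iff_nonneg_left, zero_le,
      ↓reduceIte, fanPotential, show a + 1 + (k + 1) + 1 - (a + 1) = k + 2 by omega,
      Nat.reduceSubDiff, add_tsub_cancel_left, ne_eq, Nat.add_eq_zero_iff, one_ne_zero, and_false,
      not_false_eq_true, add_tsub_cancel_right, show a + 1 + (k + 1) + 1 - a = k + 3 by omega,
      Nat.left_eq_add, sub_self, mul_zero]
    linear_combination (μ ^ (k + 1) - μ ^ (a + 1)) * hq

theorem fanPotential_sum_eq_zero (μ : ℝ) (N : ℕ) : ∑ i ∈ range N, fanPotential μ N i = 0 := by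
  simp only [fanPotential, sum_sub_distrib, sub_eq_zero]
  rw [← sum_range_reflect]
  refine sum_congr rfl fun i hi => ?_
  rw [mem_range] at hi
  congr 1
  omega

theorem coneLap_pathGraph_mulVec_fanPotential {μ m : ℝ} (hq : μ ^ 2 + 1 = (m + 2) * μ) {N : ℕ}
    (hN : 1 ≤ N) :
    coneLap (SimpleGraph.pathGraph N) m *ᵥ Sum.elim (fun i : Fin N => fanPotential μ N i) 0 =
      ((1 - μ) * (1 + μ ^ N)) •
        (Pi.single (Sum.inl ⟨0, by omega⟩) 1 - Pi.single (Sum.inl ⟨N - 1, by omega⟩) 1) := by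
  ext (a | _)
  · rw [coneLap_mulVec_inl]
    simp only [Sum.elim_inl, Sum.elim_inr, Pi.zero_apply, sub_zero]
    rw [sum_pathGraph_adj_ite a (fun b => fanPotential μ N a - fanPotential μ N b)]
    simpa [Pi.single_apply, Fin.ext_iff] using fanPotential_kirchhoff hq a.isLt
  · rw [coneLap_mulVec_inr]
    simp [Fin.sum_univ_eq_sum_range (fanPotential μ N), fanPotential_sum_eq_zero]

noncomputable def fanResistance (μ : ℝ) (N : ℕ) : ℝ :=
  2 * (μ - μ ^ N) / ((1 - μ) * (1 + μ ^ N))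

theorem effRes_coneLap_pathGraph {μ m : ℝ} (hq : μ ^ 2 + 1 = (m + 2) * μ) (hμ : μ ≠ 1) {N : ℕ}
    (hN : 1 ≤ N) (hμN : 1 + μ ^ N ≠ 0) :
    effRes (coneLap (SimpleGraph.pathGraph N) m) (Sum.inl ⟨0, by omega⟩)
        (Sum.inl ⟨N - 1, by omega⟩) = fanResistance μ N := by
  have hc : (1 - μ) * (1 + μ ^ N) ≠ 0 := mul_ne_zero (sub_ne_zero.mpr hμ.symm) hμN
  rw [effRes_eq_of_mulVec_eq (coneLap_isSymm _ _) hc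
    (coneLap_pathGraph_mulVec_fanPotential hq hN)]
  simp only [Sum.elim_inl, fanPotential, fanResistance, Nat.sub_zero, Nat.sub_sub_self hN,
    Nat.sub_add_cancel hN]
  ring

theorem fanResistance_succ_sub {μ : ℝ} (hμ : μ ≠ 1) {n : ℕ} (hn : 1 + μ ^ n ≠ 0)
    (hn' : 1 + μ ^ (n + 1) ≠ 0) :
    fanResistance μ (n + 1) - fanResistance μ n =
      2 * μ ^ n * (1 + μ) / ((1 + μ ^ (n + 1)) * (1 + μ ^ n)) := by
  have : 1 - μ ≠ 0 := sub_ne_zero.mpr hμ.symm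
  unfold fanResistance
  field_simp
  ring

theorem fanResistance_succ_sub_pos {μ : ℝ} (hμ0 : 0 < μ) (hμ1 : μ < 1) (n : ℕ) :
    0 < fanResistance μ (n + 1) - fanResistance μ n := by
  rw [fanResistance_succ_sub hμ1.ne (by positivity) (by positivity)]
  positivity

theorem fanResistance_succ_sub_lt {μ m : ℝ} (hq : μ ^ 2 + 1 = (m + 2) * μ) (hμ0 : 0 < μ)
    (hμ1 : μ < 1) {n : ℕ} (hn : 1 ≤ n) :
    fanResistance μ (n + 1) - fanResistance μ n < 2 / m ^ n := by
  have hm : 0 < m := by nlinarith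
  rw [fanResistance_succ_sub hμ1.ne (by positivity) (by positivity),
    div_lt_div_iff₀ (by positivity) (by positivity)]
  have hmμ : (m * μ) ^ n = ((1 - μ) ^ 2) ^ n := by
    rw [show m * μ = (1 - μ) ^ 2 by linear_combination -hq]
  have hle : ((1 - μ) ^ 2) ^ n ≤ (1 - μ) ^ 2 :=
    pow_le_of_le_one (by positivity) (by nlinarith) (by omega)
  have hlt : (1 - μ) ^ 2 * (1 + μ) < 1 := by nlinarith [mul_pos hμ0 hμ0]
  have hden : 1 < (1 + μ ^ (n + 1)) * (1 + μ ^ n) := by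
    nlinarith [pow_pos hμ0 n, pow_pos hμ0 (n + 1), mul_pos (pow_pos hμ0 (n + 1)) (pow_pos hμ0 n)]
  calc 2 * μ ^ n * (1 + μ) * m ^ n = 2 * (((1 - μ) ^ 2) ^ n * (1 + μ)) := by rw [← hmμ]; ring
    _ ≤ 2 * ((1 - μ) ^ 2 * (1 + μ)) := by gcongr
    _ < 2 * ((1 + μ ^ (n + 1)) * (1 + μ ^ n)) := by linarith

theorem exists_mem_Ioo_sq_add_one_eq {m : ℝ} (hm : 0 < m) :
    ∃ μ ∈ Set.Ioo (0 : ℝ) 1, μ ^ 2 + 1 = (m + 2) * μ := by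
  have hs : √(m ^ 2 + 4 * m) ^ 2 = m ^ 2 + 4 * m := Real.sq_sqrt (by positivity)
  have hs0 : 0 ≤ √(m ^ 2 + 4 * m) := Real.sqrt_nonneg _
  exact ⟨(m + 2 - √(m ^ 2 + 4 * m)) / 2, ⟨by nlinarith, by nlinarith⟩,
    by linear_combination (1 / 4) * hs⟩

/-- Asymptotics of end-to-end effective resistances in weighted fan graphs. -/
theorem effRes_fan_ends_diff (n m : ℕ) (hn : 1 ≤ n) (hm : 1 < m) :
    0 < effRes (coneLap (SimpleGraph.pathGraph (n + 1)) m)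
          (Sum.inl ⟨0, by omega⟩) (Sum.inl ⟨n, by omega⟩)
        - effRes (coneLap (SimpleGraph.pathGraph n) m)
            (Sum.inl ⟨0, by omega⟩) (Sum.inl ⟨n - 1, by omega⟩)
    ∧ effRes (coneLap (SimpleGraph.pathGraph (n + 1)) m)
          (Sum.inl ⟨0, by omega⟩) (Sum.inl ⟨n, by omega⟩)
        - effRes (coneLap (SimpleGraph.pathGraph n) m)
            (Sum.inl ⟨0, by omega⟩) (Sum.inl ⟨n - 1, by omega⟩)
      < 2 / m ^ n := by
  obtain ⟨μ, ⟨hμ0, hμ1⟩, hq⟩ :=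
    exists_mem_Ioo_sq_add_one_eq (m := m) (Nat.cast_pos.mpr (by omega))
  have hR : ∀ N (hN : 1 ≤ N), effRes (coneLap (SimpleGraph.pathGraph N) m)
      (Sum.inl ⟨0, by omega⟩) (Sum.inl ⟨N - 1, by omega⟩) = fanResistance μ N :=
    fun N hN => effRes_coneLap_pathGraph hq hμ1.ne hN (by positivity)
  have hR₁ := hR (n + 1) (by omega)
  simp only [Nat.add_sub_cancel] at hR₁
  rw [hR₁, hR n hn]
  exact ⟨fanResistance_succ_sub_pos hμ0 hμ1 n, fanResistance_succ_sub_lt hq hμ0 hμ1 hn⟩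
end
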